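/- Let G be a finite group, A ⊴ G with A = Q₁ × ⋯ × Qₜ permuted transitively by conjugation, and C ≤ G cyclic with G/A a Frobenius group with complement CA/A and cyclic kernel. Set G₁ = N_G(Q₁) and C₁ = C ∩ G₁, and assume G₁/A = C₁K₁ for a subgroup K₁ of the Frobenius kernel of G/A. If U₁ ≤ Q₁ is C₁-invariant and G₁-intravariant in Q₁, then the coset representatives ĝ_Z ∈ Z (for Z ∈ G₁\G) can be chosen so that U = ∏_Z U₁^{ĝ_Z} is invariant under conjugation by C. -/

import Mathlib

/-- Conjugation of a subgroup: `conjS g H = g H g⁻¹`. -/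
def conjS {G : Type*} [Group G] (g : G) (H : Subgroup G) : Subgroup G :=
  H.map (MulAut.conj g).toMonoidHom

/-!
`C` acts on the right cosets `G₁ \ G` by right multiplication, and representatives can be chosen
orbit by orbit: fix a base coset `B` with representative `g`, and send `B c` to `g c`. This is
consistent as soon as the stabiliser `C_B` fixes `U₁^g`. If `C_B = 1` there is nothing to check.
Otherwise the Frobenius structure of `G/A` forces `B` to contain an element `d` of `C`: writing
`gA = k dA` with `k` in the kernel, `k` centralises a nontrivial element of the complement modulo
`K₁`, and fixed-point-freeness puts `k` in `K₁ ≤ G₁/A`. Taking `g = d`, the stabiliser lies in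
`C ∩ G₁ = C₁`; it fixes `U₁`, hence also `U₁^d = conjS d⁻¹ U₁` because `C` is abelian.
-/

open Pointwise

section ConjS

variable {G : Type*} [Group G]

theorem conjS_eq_smul (g : G) (H : Subgroup G) : conjS g H = MulAut.conj g • H := rfl

theorem conjS_mul (a b : G) (H : Subgroup G) : conjS (a * b) H = conjS a (conjS b H) := by
  simp only [conjS_eq_smul, map_mul, mul_smul]

theorem conjS_iSup {ι : Sort*} (g : G) (H : ι → Subgroup G) :
    conjS g (⨆ i, H i) = ⨆ i, conjS g (H i) :=
  Subgroup.map_iSup _ H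

end ConjS

theorem Subgroup.normal_of_le_of_isCyclic {Γ : Type*} [Group Γ] {N K : Subgroup Γ} [K.Normal]
    [IsCyclic K] (hNK : N ≤ K) : N.Normal where
  conj_mem n hn g := by
    obtain ⟨m, hm⟩ := MonoidHom.map_cyclic (MulAut.conjNormal g : MulAut K).toMonoidHom
    have hconj : g * n * g⁻¹ = n ^ m := congrArg Subtype.val (hm ⟨n, hNK hn⟩)
    exact hconj ▸ zpow_mem hn m

theorem iSup_le_normalizer_of_commute {G ι : Type*} [Group G] (Q : ι → Subgroup G)
    (hcomm : ∀ i j, i ≠ j → ∀ x ∈ Q i, ∀ y ∈ Q j, x * y = y * x) (i₀ : ι) :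
    ⨆ i, Q i ≤ Subgroup.normalizer (Q i₀ : Set G) := by
  refine iSup_le fun i => ?_
  by_cases hi : i = i₀
  · exact hi ▸ Subgroup.le_normalizer
  · refine le_trans (fun x hx => ?_) (Subgroup.centralizer_le_normalizer _)
    exact Subgroup.mem_centralizer_iff.mpr fun y hy => (hcomm i i₀ hi x hx y hy).symm

instance QuotientGroup.rightRel.mulActionOpposite {G : Type*} [Group G] (H : Subgroup G) :
    MulAction Gᵐᵒᵖ (Quotient (QuotientGroup.rightRel H)) where
  smul g := Quotient.map' (g • ·) fun a b hab => by
    rw [QuotientGroup.rightRel_apply] at hab ⊢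
    simpa [MulOpposite.smul_eq_mul_unop, mul_assoc] using hab
  one_smul := Quotient.ind' fun _ => congrArg Quotient.mk'' (one_smul _ _)
  mul_smul g g' := Quotient.ind' fun _ => congrArg Quotient.mk'' (mul_smul _ _ _)

theorem QuotientGroup.mk_mul_eq_mk_rightRel_iff {G : Type*} [Group G] (H : Subgroup G) (g c : G) :
    (Quotient.mk'' (g * c) : Quotient (QuotientGroup.rightRel H)) = Quotient.mk'' g ↔
      g * c * g⁻¹ ∈ H := by
  rw [Quotient.eq'', QuotientGroup.rightRel_apply, ← H.inv_mem_iff]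
  group

theorem MulAction.exists_section_comp_smul {M X Y W : Type*} [Group M] [MulAction M X]
    [MulAction M Y] (f : Y → X) (hf : ∀ (m : M) y, f (m • y) = m • f y) (φ : Y → W)
    (hφ : ∀ (m : M) y y', φ y = φ y' → φ (m • y) = φ (m • y'))
    (hfix : ∀ x, ∃ y, f y = x ∧ ∀ m : M, m • x = x → φ (m • y) = φ y) :
    ∃ s : X → Y, (∀ x, f (s x) = x) ∧ ∀ (m : M) x, φ (s (m • x)) = φ (m • s x) := by
  choose y hfy hy using hfix
  let b : X → X := fun x => (⟦x⟧ : orbitRel.Quotient M X).out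
  have hb : ∀ x, ∃ g : M, g • b x = x := fun x => by
    obtain ⟨g, hg⟩ := Quotient.mk_out (s := orbitRel M X) x
    exact ⟨g⁻¹, by rw [inv_smul_eq_iff]; exact hg.symm⟩
  choose g hg using hb
  have hb_smul : ∀ (m : M) x, b (m • x) = b x := fun m x =>
    congrArg Quotient.out (Quotient.sound (mem_orbit x m))
  refine ⟨fun x => g x • y (b x), fun x => by rw [hf, hfy, hg], fun m x => ?_⟩
  have hgm : g (m • x) • b x = (m * g x) • b x := by
    rw [← hb_smul m x, hg, mul_smul, hb_smul, hg]
  have hstab : ((m * g x)⁻¹ * g (m • x)) • b x = b x := by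
    rw [mul_smul, hgm, inv_smul_smul]
  calc φ (g (m • x) • y (b (m • x)))
      = φ ((m * g x) • ((m * g x)⁻¹ * g (m • x)) • y (b x)) := by
        rw [hb_smul, smul_smul, mul_inv_cancel_left]
    _ = φ ((m * g x) • y (b x)) := hφ _ _ _ (hy _ _ hstab)
    _ = φ (m • g x • y (b x)) := by rw [mul_smul]

section Frobenius

variable {Γ : Type*} [Group Γ] {H K : Subgroup Γ}

theorem eq_of_conj_eq_of_fixedPointFree
    (hfpf : ∀ h ∈ H, h ≠ 1 → ∀ k ∈ K, k ≠ 1 → h * k * h⁻¹ ≠ k)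
    {h k k' : Γ} (hh : h ∈ H) (hh1 : h ≠ 1) (hk : k ∈ K) (hk' : k' ∈ K)
    (heq : k * h * k⁻¹ = k' * h * k'⁻¹) : k = k' := by
  by_contra hne
  refine hfpf h hh hh1 (k'⁻¹ * k) (K.mul_mem (K.inv_mem hk') hk)
    (fun h1 => hne (inv_mul_eq_one.mp h1).symm) ?_
  calc h * (k'⁻¹ * k) * h⁻¹ = k'⁻¹ * (k' * h * k'⁻¹) * k * h⁻¹ := by group
    _ = k'⁻¹ * (k * h * k⁻¹) * k * h⁻¹ := by rw [heq]
    _ = k'⁻¹ * k := by group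

theorem mem_of_commutator_mem_of_fixedPointFree [Finite Γ] {K₁ : Subgroup Γ} [K₁.Normal]
    (hK₁ : K₁ ≤ K) (hfpf : ∀ h ∈ H, h ≠ 1 → ∀ k ∈ K, k ≠ 1 → h * k * h⁻¹ ≠ k)
    {h k : Γ} (hh : h ∈ H) (hh1 : h ≠ 1) (hk : k ∈ K) (hk₁ : h⁻¹ * (k * h * k⁻¹) ∈ K₁) :
    k ∈ K₁ := by
  let twist : K₁ → K₁ := fun y => ⟨h⁻¹ * (y * h * y⁻¹), by
    have := ‹K₁.Normal›.conj_mem _ y.2 h⁻¹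
    simpa [mul_assoc] using K₁.mul_mem this (K₁.inv_mem y.2)⟩
  have htwist : Function.Injective twist := fun y y' hyy' =>
    Subtype.ext <| eq_of_conj_eq_of_fixedPointFree hfpf hh hh1 (hK₁ y.2) (hK₁ y'.2)
      (mul_left_cancel (congrArg Subtype.val hyy'))
  obtain ⟨y, hy⟩ := (Finite.injective_iff_surjective.mp htwist) ⟨_, hk₁⟩
  have hyk : (y : Γ) = k := eq_of_conj_eq_of_fixedPointFree hfpf hh hh1 (hK₁ y.2) hk
    (mul_left_cancel (congrArg Subtype.val hy))
  exact hyk ▸ y.2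

theorem mem_of_conj_mem_sup_of_fixedPointFree [Finite Γ] [K.Normal] {H₁ K₁ : Subgroup Γ}
    [K₁.Normal] (hHK : H ⊓ K = ⊥) (hH₁ : H₁ ≤ H) (hK₁ : K₁ ≤ K)
    (hfpf : ∀ h ∈ H, h ≠ 1 → ∀ k ∈ K, k ≠ 1 → h * k * h⁻¹ ≠ k)
    {h k : Γ} (hh : h ∈ H) (hh1 : h ≠ 1) (hk : k ∈ K) (hconj : k * h * k⁻¹ ∈ H₁ ⊔ K₁) :
    k ∈ K₁ := by
  rw [← SetLike.mem_coe, Subgroup.mul_normal] at hconj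
  obtain ⟨h₁, hh₁, k₁, hk₁, hprod⟩ := hconj
  have hprod : h₁ * k₁ = k * h * k⁻¹ := hprod
  have hh₁h : h₁ * h⁻¹ ∈ H ⊓ K := by
    refine ⟨H.mul_mem (hH₁ hh₁) (H.inv_mem hh), ?_⟩
    have hconjK : h * (k⁻¹ * k₁⁻¹) * h⁻¹ ∈ K :=
      ‹K.Normal›.conj_mem _ (K.mul_mem (K.inv_mem hk) (K.inv_mem (hK₁ hk₁))) h
    have e : h₁ * h⁻¹ = k * (h * (k⁻¹ * k₁⁻¹) * h⁻¹) := by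
      rw [eq_mul_inv_of_mul_eq hprod]; group
    exact e ▸ K.mul_mem hk hconjK
  rw [hHK, Subgroup.mem_bot, mul_inv_eq_one] at hh₁h
  subst hh₁h
  exact mem_of_commutator_mem_of_fixedPointFree hK₁ hfpf hh hh1 hk
    (eq_inv_mul_of_mul_eq hprod ▸ hk₁)

end Frobenius

theorem exists_mem_mul_inv_mem_of_conj_mem {G : Type*} [Group G] [Finite G]
    {A C G₁ : Subgroup G} [A.Normal] [IsMulCommutative C] {Kbar K₁bar : Subgroup (G ⧸ A)}
    [Kbar.Normal] [K₁bar.Normal] (hCA : C ⊓ A = ⊥)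
    (h1 : C.map (QuotientGroup.mk' A) ⊓ Kbar = ⊥)
    (h2 : C.map (QuotientGroup.mk' A) ⊔ Kbar = ⊤)
    (hfrob : ∀ c ∈ C.map (QuotientGroup.mk' A), c ≠ 1 →
      ∀ k ∈ Kbar, k ≠ 1 → c * k * c⁻¹ ≠ k)
    (hK₁ : K₁bar ≤ Kbar) (hAG₁ : A ≤ G₁)
    (hG₁ : G₁.map (QuotientGroup.mk' A) = (C ⊓ G₁).map (QuotientGroup.mk' A) ⊔ K₁bar)
    {c g : G} (hc : c ∈ C) (hc1 : c ≠ 1) (hg : g * c * g⁻¹ ∈ G₁) :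
    ∃ d ∈ C, g * d⁻¹ ∈ G₁ := by
  set π := QuotientGroup.mk' A
  have hπc : π c ≠ 1 := fun hπ => hc1 <| by
    have hcA : c ∈ C ⊓ A := ⟨hc, (QuotientGroup.eq_one_iff c).mp hπ⟩
    rwa [hCA, Subgroup.mem_bot] at hcA
  have hg_mem : π g ∈ (Kbar : Set (G ⧸ A)) * (C.map π : Set (G ⧸ A)) := by
    rw [← Subgroup.normal_mul, sup_comm, h2]; trivial
  obtain ⟨k, hk, _, ⟨d, hd, rfl⟩, hkd : k * π d = π g⟩ := hg_mem
  have hconj : k * π c * k⁻¹ = π (g * c * g⁻¹) := by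
    have hdc : d * c * d⁻¹ = c := by
      rw [setLike_mul_comm hd hc, mul_inv_cancel_right]
    calc k * π c * k⁻¹ = k * π (d * c * d⁻¹) * k⁻¹ := by rw [hdc]
      _ = π (g * c * g⁻¹) := by simp only [map_mul, map_inv, ← hkd]; group
  have hconj_mem : k * π c * k⁻¹ ∈ (C ⊓ G₁).map π ⊔ K₁bar := by
    rw [hconj, ← hG₁]; exact ⟨_, hg, rfl⟩
  have hkK₁ : k ∈ K₁bar :=
    mem_of_conj_mem_sup_of_fixedPointFree h1 (Subgroup.map_mono inf_le_left) hK₁ hfrob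
      ⟨c, hc, rfl⟩ hπc hk hconj_mem
  refine ⟨d, hd, ?_⟩
  have hgd : π (g * d⁻¹) ∈ G₁.map π := by
    rw [map_mul, map_inv, ← hkd, mul_inv_cancel_right, hG₁]
    exact Subgroup.mem_sup_right hkK₁
  rwa [← Subgroup.mem_comap, Subgroup.comap_map_eq, QuotientGroup.ker_mk',
    sup_eq_left.mpr hAG₁] at hgd

theorem exists_rep_conjS_eq_of_stabilizes {G : Type*} [Group G] {C G₁ : Subgroup G}
    [IsMulCommutative C] {U₁ : Subgroup G} (hCinv : ∀ c ∈ C ⊓ G₁, conjS c U₁ = U₁)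
    (hmeet : ∀ c ∈ C, c ≠ 1 → ∀ g, g * c * g⁻¹ ∈ G₁ → ∃ d ∈ C, g * d⁻¹ ∈ G₁)
    (Z : Quotient (QuotientGroup.rightRel G₁)) :
    ∃ g, Quotient.mk'' g = Z ∧ ∀ c ∈ C, Quotient.mk'' (g * c) = Z →
      conjS (g * c)⁻¹ U₁ = conjS g⁻¹ U₁ := by
  induction Z using Quotient.inductionOn' with | h g₀ => ?_
  by_cases hstab : ∃ c ∈ C, c ≠ 1 ∧
      (Quotient.mk'' (g₀ * c) : Quotient (QuotientGroup.rightRel G₁)) = Quotient.mk'' g₀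
  · obtain ⟨c₀, hc₀, hc₀1, hc₀Z⟩ := hstab
    obtain ⟨d, hd, hdg₀⟩ :=
      hmeet c₀ hc₀ hc₀1 g₀ ((QuotientGroup.mk_mul_eq_mk_rightRel_iff _ _ _).mp hc₀Z)
    have hdZ : (Quotient.mk'' d : Quotient (QuotientGroup.rightRel G₁)) = Quotient.mk'' g₀ :=
      Quotient.eq''.mpr (QuotientGroup.rightRel_apply.mpr hdg₀)
    refine ⟨d, hdZ, fun c hc hcZ => ?_⟩
    rw [← hdZ, QuotientGroup.mk_mul_eq_mk_rightRel_iff, setLike_mul_comm hd hc,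
      mul_inv_cancel_right] at hcZ
    rw [mul_inv_rev, setLike_mul_comm (C.inv_mem hc) (C.inv_mem hd), conjS_mul,
      hCinv _ ⟨C.inv_mem hc, G₁.inv_mem hcZ⟩]
  · push Not at hstab
    refine ⟨g₀, rfl, fun c hc hcZ => ?_⟩
    by_cases hc1 : c = 1
    · rw [hc1, mul_one]
    · exact absurd hcZ (hstab c hc hc1)

theorem stmt18_general {G : Type*} [Group G] [Finite G] {t : ℕ} (ht : 0 < t)
    (Q : Fin t → Subgroup G) (A : Subgroup G) [A.Normal]
    (hsupA : A = ⨆ i, Q i)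
    (hcomm : ∀ i j, i ≠ j → ∀ x ∈ Q i, ∀ y ∈ Q j, x * y = y * x)
    (C : Subgroup G) (hCcyc : IsCyclic ↥C) (hCA : C ⊓ A = ⊥)
    (Kbar : Subgroup (G ⧸ A)) [Kbar.Normal] (hKcyc : IsCyclic ↥Kbar)
    (h1 : C.map (QuotientGroup.mk' A) ⊓ Kbar = ⊥)
    (h2 : C.map (QuotientGroup.mk' A) ⊔ Kbar = ⊤)
    (hfrob : ∀ c ∈ C.map (QuotientGroup.mk' A), c ≠ 1 →
      ∀ k ∈ Kbar, k ≠ 1 → c * k * c⁻¹ ≠ k)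
    (K₁bar : Subgroup (G ⧸ A)) (hK₁ : K₁bar ≤ Kbar)
    (hG₁ : (Subgroup.normalizer (Q ⟨0, ht⟩ : Set G)).map (QuotientGroup.mk' A)
        = (C ⊓ (Subgroup.normalizer (Q ⟨0, ht⟩ : Set G))).map (QuotientGroup.mk' A) ⊔ K₁bar)
    (U₁ : Subgroup G)
    (hCinv : ∀ c ∈ C ⊓ (Subgroup.normalizer (Q ⟨0, ht⟩ : Set G)), conjS c U₁ = U₁) :
    ∃ rep : Quotient (QuotientGroup.rightRel (Subgroup.normalizer (Q ⟨0, ht⟩ : Set G))) → G,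
      (∀ Z, Quotient.mk'' (rep Z) = Z) ∧
      ∀ c ∈ C, conjS c (⨆ Z, conjS (rep Z)⁻¹ U₁) = ⨆ Z, conjS (rep Z)⁻¹ U₁ := by
  have := hCcyc
  have := hKcyc
  have : K₁bar.Normal := Subgroup.normal_of_le_of_isCyclic hK₁
  have hAG₁ : A ≤ Subgroup.normalizer (Q ⟨0, ht⟩ : Set G) :=
    hsupA ▸ iSup_le_normalizer_of_commute Q hcomm _
  have hrep := exists_rep_conjS_eq_of_stabilizes hCinv fun c hc hc1 g hg =>
    exists_mem_mul_inv_mem_of_conj_mem hCA h1 h2 hfrob hK₁ hAG₁ hG₁ hc hc1 hg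
  obtain ⟨rep, hrep_mk, hrep_smul⟩ := MulAction.exists_section_comp_smul (M := C.op)
    Quotient.mk'' (fun _ _ => rfl) (fun g => conjS g⁻¹ U₁)
    (fun m y y' hyy' => by
      simp only [Subgroup.smul_def, MulOpposite.smul_eq_mul_unop, mul_inv_rev, conjS_mul, hyy'])
    (fun Z => by
      obtain ⟨g, hgZ, hg⟩ := hrep Z
      exact ⟨g, hgZ, fun m hm => hg _ m.2 (hgZ ▸ hm)⟩)
  refine ⟨rep, hrep_mk, fun c hc => ?_⟩
  let m : C.op := ⟨MulOpposite.op c⁻¹, C.inv_mem hc⟩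
  have hshift : ∀ Z, conjS c (conjS (rep Z)⁻¹ U₁) = conjS (rep (m • Z))⁻¹ U₁ := fun Z => by
    rw [hrep_smul, ← conjS_mul]
    simp [m, Subgroup.smul_def, MulOpposite.smul_eq_mul_unop]
  rw [conjS_iSup]
  simp_rw [hshift]
  exact (MulAction.bijective m).surjective.iSup_comp fun Z => conjS (rep Z)⁻¹ U₁

theorem stmt18 {G : Type*} [Group G] [Finite G] {t : ℕ} (ht : 0 < t)
    (Q : Fin t → Subgroup G) (A : Subgroup G) [A.Normal]
    (hle : ∀ i, Q i ≤ A) (hsupA : A = ⨆ i, Q i)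
    (hind : iSupIndep Q)
    (hcomm : ∀ i j, i ≠ j → ∀ x ∈ Q i, ∀ y ∈ Q j, x * y = y * x)
    (hperm : ∀ g : G, ∀ i, ∃ j, conjS g (Q i) = Q j)
    (htrans : ∀ i j, ∃ g : G, conjS g (Q i) = Q j)
    (C : Subgroup G) (hCcyc : IsCyclic ↥C) (hCA : C ⊓ A = ⊥)
    (Kbar : Subgroup (G ⧸ A)) [Kbar.Normal] (hKcyc : IsCyclic ↥Kbar)
    (hKnt : Kbar ≠ ⊥)
    (h1 : C.map (QuotientGroup.mk' A) ⊓ Kbar = ⊥)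
    (h2 : C.map (QuotientGroup.mk' A) ⊔ Kbar = ⊤)
    (hfrob : ∀ c ∈ C.map (QuotientGroup.mk' A), c ≠ 1 →
      ∀ k ∈ Kbar, k ≠ 1 → c * k * c⁻¹ ≠ k)
    (K₁bar : Subgroup (G ⧸ A)) (hK₁ : K₁bar ≤ Kbar)
    (hG₁ : (Subgroup.normalizer (Q ⟨0, ht⟩ : Set G)).map (QuotientGroup.mk' A)
        = (C ⊓ (Subgroup.normalizer (Q ⟨0, ht⟩ : Set G))).map (QuotientGroup.mk' A) ⊔ K₁bar)
    (U₁ : Subgroup G) (hU₁ : U₁ ≤ Q ⟨0, ht⟩)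
    (hCinv : ∀ c ∈ C ⊓ (Subgroup.normalizer (Q ⟨0, ht⟩ : Set G)), conjS c U₁ = U₁)
    (hintra : ∀ g ∈ (Subgroup.normalizer (Q ⟨0, ht⟩ : Set G)),
      ∃ q ∈ Q ⟨0, ht⟩, conjS g⁻¹ U₁ = conjS q⁻¹ U₁) :
    ∃ rep : Quotient (QuotientGroup.rightRel (Subgroup.normalizer (Q ⟨0, ht⟩ : Set G))) → G,
      (∀ Z, Quotient.mk'' (rep Z) = Z) ∧
      ∀ c ∈ C, conjS c (⨆ Z, conjS (rep Z)⁻¹ U₁) = ⨆ Z, conjS (rep Z)⁻¹ U₁ :=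
  stmt18_general ht Q A hsupA hcomm C hCcyc hCA Kbar hKcyc h1 h2 hfrob K₁bar hK₁ hG₁ U₁ hCinv
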